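/- arXiv:2210.14646 — 3 statements merged into one kernel-verified Lean document; each statement's English description precedes it below -/
import Mathlib

section
/- Let n ≥ 1, let Λ be an n×n real symmetric positive definite matrix with smallest eigenvalue λ_min > 0 and largest eigenvalue λ_max, and let r > 0. Define sat : ℝⁿ → ℝⁿ by sat(x) = (tanh(‖x‖)/‖x‖)·x for x ≠ 0 and sat(0) = 0, where ‖·‖ is the Euclidean norm. Then for every x ∈ ℝⁿ with ‖x‖ ≤ r, the inner product satisfies ⟪x, sat(Λx)⟫ ≥ λ_min · (tanh(λ_max r)/(λ_max r)) · ‖x‖². -/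
open scoped RealInnerProductSpace Classical

/-- The smooth saturation function `sat(x) = (tanh ‖x‖ / ‖x‖) · x` (with `sat 0 = 0`). -/
noncomputable def sat {n : ℕ} (x : EuclideanSpace ℝ (Fin n)) : EuclideanSpace ℝ (Fin n) :=
  if x = 0 then 0 else (Real.tanh ‖x‖ / ‖x‖) • x

/-!
Write `y = Λx`. In an orthonormal eigenbasis of `Λ` one reads off `⟪x, y⟫ ≥ λmin ‖x‖²` and
`‖y‖ ≤ λmax ‖x‖ ≤ λmax r`. Since `sat y = (tanh ‖y‖ / ‖y‖) • y` and `t ↦ tanh t / t` is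
decreasing on `(0, ∞)`, the gain `tanh ‖y‖ / ‖y‖` is at least `tanh (λmax r) / (λmax r)`.
-/

namespace Real

theorem hasDerivAt_tanh (x : ℝ) : HasDerivAt tanh (1 / cosh x ^ 2) x := by
  have h := (hasDerivAt_sinh x).div (hasDerivAt_cosh x) (cosh_pos x).ne'
  rw [← sq, ← sq, cosh_sq_sub_sinh_sq] at h
  rwa [show tanh = sinh / cosh from funext tanh_eq_sinh_div_cosh]

theorem self_div_cosh_sq_le_tanh {t : ℝ} (ht : 0 ≤ t) : t / cosh t ^ 2 ≤ tanh t := by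
  have hsinh : t ≤ sinh t * cosh t :=
    (self_le_sinh_iff.2 ht).trans (le_mul_of_one_le_right (sinh_nonneg_iff.2 ht) (one_le_cosh t))
  rw [tanh_eq_sinh_div_cosh, div_le_div_iff₀ (by positivity) (cosh_pos t)]
  calc t * cosh t ≤ sinh t * cosh t * cosh t := by gcongr
    _ = sinh t * cosh t ^ 2 := by ring

theorem tanh_div_self_nonneg (t : ℝ) : 0 ≤ tanh t / t := by
  rw [tanh_eq_sinh_div_cosh, div_right_comm]
  refine div_nonneg (div_nonneg_iff.2 ?_) (cosh_pos t).le
  rcases le_total 0 t with ht | ht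
  · exact .inl ⟨sinh_nonneg_iff.2 ht, ht⟩
  · exact .inr ⟨sinh_nonpos_iff.2 ht, ht⟩

theorem antitoneOn_tanh_div_self : AntitoneOn (fun t => tanh t / t) (Set.Ioi 0) := by
  have hderiv : ∀ t ∈ Set.Ioi (0 : ℝ), HasDerivAt (fun t => tanh t / t)
      ((1 / cosh t ^ 2 * t - tanh t * 1) / t ^ 2) t := fun t ht =>
    (hasDerivAt_tanh t).div (hasDerivAt_id t) (ne_of_gt ht)
  refine antitoneOn_of_hasDerivWithinAt_nonpos (convex_Ioi 0)
    (f' := fun t => (1 / cosh t ^ 2 * t - tanh t * 1) / t ^ 2)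
    (fun t ht => (hderiv t ht).continuousAt.continuousWithinAt) ?_ ?_
  · rw [interior_Ioi]
    exact fun t ht => (hderiv t ht).hasDerivWithinAt
  · rw [interior_Ioi]
    intro t ht
    have htanh := self_div_cosh_sq_le_tanh ht.le
    refine div_nonpos_of_nonpos_of_nonneg ?_ (sq_nonneg t)
    rw [one_div_mul_eq_div, mul_one]
    linarith

end Real

theorem sat_eq_smul {n : ℕ} (x : EuclideanSpace ℝ (Fin n)) :
    sat x = (Real.tanh ‖x‖ / ‖x‖) • x := by
  unfold sat
  split_ifs with hx <;> simp [hx]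

namespace Matrix.IsHermitian

variable {ι : Type*} [Fintype ι] [DecidableEq ι] {A : Matrix ι ι ℝ} (hA : A.IsHermitian)

theorem eigenvectorBasis_repr_mulVec (x : EuclideanSpace ℝ ι) (i : ι) :
    hA.eigenvectorBasis.repr (WithLp.toLp 2 (A *ᵥ x)) i =
      hA.eigenvalues i * hA.eigenvectorBasis.repr x i := by
  have hsymm := isSymmetric_toEuclideanLin_iff.2 hA
  have heig : A.toEuclideanLin (hA.eigenvectorBasis i) =
      hA.eigenvalues i • hA.eigenvectorBasis i :=
    congrArg (WithLp.toLp 2) (hA.mulVec_eigenvectorBasis i)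
  simp only [OrthonormalBasis.repr_apply_apply]
  rw [show WithLp.toLp 2 (A *ᵥ x) = A.toEuclideanLin x from rfl, ← hsymm, heig,
    real_inner_smul_left]

theorem inner_mulVec_self_eq_sum (x : EuclideanSpace ℝ ι) :
    ⟪x, WithLp.toLp 2 (A *ᵥ x)⟫ =
      ∑ i, hA.eigenvalues i * hA.eigenvectorBasis.repr x i ^ 2 := by
  rw [← hA.eigenvectorBasis.repr.inner_map_map, PiLp.inner_apply]
  refine Finset.sum_congr rfl fun i _ => ?_
  rw [hA.eigenvectorBasis_repr_mulVec, RCLike.inner_apply, conj_trivial]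
  ring

theorem norm_mulVec_sq_eq_sum (x : EuclideanSpace ℝ ι) :
    ‖WithLp.toLp 2 (A *ᵥ x)‖ ^ 2 =
      ∑ i, (hA.eigenvalues i * hA.eigenvectorBasis.repr x i) ^ 2 := by
  rw [← hA.eigenvectorBasis.repr.norm_map, EuclideanSpace.real_norm_sq_eq]
  simp only [hA.eigenvectorBasis_repr_mulVec]

theorem mul_norm_sq_le_inner_mulVec_self {m : ℝ} (hm : ∀ i, m ≤ hA.eigenvalues i)
    (x : EuclideanSpace ℝ ι) : m * ‖x‖ ^ 2 ≤ ⟪x, WithLp.toLp 2 (A *ᵥ x)⟫ := by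
  rw [hA.inner_mulVec_self_eq_sum, ← hA.eigenvectorBasis.repr.norm_map,
    EuclideanSpace.real_norm_sq_eq, Finset.mul_sum]
  exact Finset.sum_le_sum fun i _ => mul_le_mul_of_nonneg_right (hm i) (sq_nonneg _)

theorem norm_mulVec_le {M : ℝ} (hM : ∀ i, |hA.eigenvalues i| ≤ M)
    (x : EuclideanSpace ℝ ι) : ‖WithLp.toLp 2 (A *ᵥ x)‖ ≤ M * ‖x‖ := by
  rcases isEmpty_or_nonempty ι with hι | ⟨⟨i₀⟩⟩
  · simp [Subsingleton.elim x 0]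
  have hM0 : 0 ≤ M := (abs_nonneg _).trans (hM i₀)
  refine le_of_pow_le_pow_left₀ two_ne_zero (by positivity) ?_
  rw [hA.norm_mulVec_sq_eq_sum, mul_pow, ← hA.eigenvectorBasis.repr.norm_map,
    EuclideanSpace.real_norm_sq_eq, Finset.mul_sum]
  refine Finset.sum_le_sum fun i _ => ?_
  rw [mul_pow, ← sq_abs (hA.eigenvalues i)]
  gcongr
  exact hM i

end Matrix.IsHermitian

theorem inner_sat_lower_bound_general (n : ℕ)
    (Λ : Matrix (Fin n) (Fin n) ℝ) (hΛ : Λ.IsHermitian)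
    (lmin lmax : ℝ)
    (hmin : IsLeast (Set.range hΛ.eigenvalues) lmin)
    (hmax : IsGreatest (Set.range hΛ.eigenvalues) lmax)
    (hlmin : 0 < lmin)
    (r : ℝ)
    (x : EuclideanSpace ℝ (Fin n)) (hx : ‖x‖ ≤ r) :
    ⟪x, sat (WithLp.toLp 2 (Λ.mulVec x) : EuclideanSpace ℝ (Fin n))⟫ ≥
      lmin * (Real.tanh (lmax * r) / (lmax * r)) * ‖x‖ ^ 2 := by
  have hlow : ∀ i, lmin ≤ hΛ.eigenvalues i := fun i => hmin.2 ⟨i, rfl⟩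
  have hlmax : 0 ≤ lmax := hlmin.le.trans (hmax.2 hmin.1)
  have habs : ∀ i, |hΛ.eigenvalues i| ≤ lmax := fun i =>
    abs_le.2 ⟨by linarith [hlow i], hmax.2 ⟨i, rfl⟩⟩
  set y : EuclideanSpace ℝ (Fin n) := WithLp.toLp 2 (Λ.mulVec x)
  have hquad : lmin * ‖x‖ ^ 2 ≤ ⟪x, y⟫ := hΛ.mul_norm_sq_le_inner_mulVec_self hlow x
  have hxy : 0 ≤ ⟪x, y⟫ := le_trans (by positivity) hquad
  have hgain : Real.tanh (lmax * r) / (lmax * r) * ⟪x, y⟫ ≤ Real.tanh ‖y‖ / ‖y‖ * ⟪x, y⟫ := by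
    rcases eq_or_ne y 0 with hy | hy
    · simp [hy]
    have hyr : ‖y‖ ≤ lmax * r := (hΛ.norm_mulVec_le habs x).trans (by gcongr)
    have hypos : 0 < ‖y‖ := norm_pos_iff.2 hy
    exact mul_le_mul_of_nonneg_right
      (Real.antitoneOn_tanh_div_self hypos (hypos.trans_le hyr) hyr) hxy
  rw [sat_eq_smul, real_inner_smul_right]
  calc lmin * (Real.tanh (lmax * r) / (lmax * r)) * ‖x‖ ^ 2
      = Real.tanh (lmax * r) / (lmax * r) * (lmin * ‖x‖ ^ 2) := by ring
    _ ≤ Real.tanh (lmax * r) / (lmax * r) * ⟪x, y⟫ :=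
      mul_le_mul_of_nonneg_left hquad (Real.tanh_div_self_nonneg _)
    _ ≤ Real.tanh ‖y‖ / ‖y‖ * ⟪x, y⟫ := hgain

/-- **Lower bound on the saturated formation-keeping term.**
If `Λ` is symmetric positive definite with smallest eigenvalue `λmin > 0` and largest
eigenvalue `λmax`, then for `‖x‖ ≤ r`,
`⟪x, sat (Λ x)⟫ ≥ λmin · tanh(λmax r)/(λmax r) · ‖x‖²`. -/
theorem inner_sat_lower_bound (n : ℕ) (hn : 1 ≤ n)
    (Λ : Matrix (Fin n) (Fin n) ℝ) (hΛ : Λ.IsHermitian) (hPD : Λ.PosDef)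
    (lmin lmax : ℝ)
    (hmin : IsLeast (Set.range hΛ.eigenvalues) lmin)
    (hmax : IsGreatest (Set.range hΛ.eigenvalues) lmax)
    (hlmin : 0 < lmin)
    (r : ℝ) (hr : 0 < r)
    (x : EuclideanSpace ℝ (Fin n)) (hx : ‖x‖ ≤ r) :
    ⟪x, sat (WithLp.toLp 2 (Λ.mulVec x) : EuclideanSpace ℝ (Fin n))⟫ ≥
      lmin * (Real.tanh (lmax * r) / (lmax * r)) * ‖x‖ ^ 2 :=
  inner_sat_lower_bound_general n Λ hΛ lmin lmax hmin hmax hlmin r x hx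
end

section
/- Let Δ₀ > 0, k_ξ > 0, and r > 0 be real constants, and let x, y, z ∈ ℝ satisfy x² + y² + z² ≤ r². Set Δ = √(Δ₀² + x² + y² + z²) and D = √(Δ² + y² + z²). Then k_ξ · x²/√(1 + x²) + y²/D + z²/D ≥ min{k_ξ/√(1 + r²), 1/√(Δ₀² + 2r²)} · (x² + y² + z²). -/
/-!
Each of the three terms is `a / √s` with `a ≤ s`, and on the ball `s` is bounded by a constant:
`1 + x² ≤ 1 + r²` and `Δ² + y² + z² = Δ₀² + x² + 2y² + 2z² ≤ Δ₀² + 2r²`.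
Replacing `√s` by the square root of that bound only shrinks each term, and the smaller of the two
resulting coefficients then bounds the whole sum from below.
-/

open Real

/-- The hypothesis `a ≤ s` covers the degenerate case `s = 0`, where `a / √s` is the junk value `0`. -/
lemma div_sqrt_le_div_sqrt_of_le {a s S : ℝ} (ha : 0 ≤ a) (has : a ≤ s) (hsS : s ≤ S) :
    a / √S ≤ a / √s := by
  rcases ha.eq_or_lt with rfl | ha
  · simp
  · exact div_le_div_of_nonneg_left ha.le (sqrt_pos.mpr (ha.trans_le has)) (sqrt_le_sqrt hsS)

theorem path_following_quadratic_lower_bound_general (Δ₀ kξ r x y z : ℝ)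
    (hkξ : 0 < kξ)
    (hball : x ^ 2 + y ^ 2 + z ^ 2 ≤ r ^ 2) :
    let Δ : ℝ := Real.sqrt (Δ₀ ^ 2 + x ^ 2 + y ^ 2 + z ^ 2)
    let D : ℝ := Real.sqrt (Δ ^ 2 + y ^ 2 + z ^ 2)
    kξ * x ^ 2 / Real.sqrt (1 + x ^ 2) + y ^ 2 / D + z ^ 2 / D ≥
      min (kξ / Real.sqrt (1 + r ^ 2)) (1 / Real.sqrt (Δ₀ ^ 2 + 2 * r ^ 2)) *
        (x ^ 2 + y ^ 2 + z ^ 2) := by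
  intro Δ D
  have hΔ : Δ ^ 2 = Δ₀ ^ 2 + x ^ 2 + y ^ 2 + z ^ 2 := sq_sqrt (by positivity)
  have hD : Δ ^ 2 + y ^ 2 + z ^ 2 ≤ Δ₀ ^ 2 + 2 * r ^ 2 := by rw [hΔ]; nlinarith [sq_nonneg x]
  have hx : x ^ 2 / √(1 + r ^ 2) ≤ x ^ 2 / √(1 + x ^ 2) :=
    div_sqrt_le_div_sqrt_of_le (sq_nonneg x) (by linarith) (by nlinarith [sq_nonneg y, sq_nonneg z])
  have hy : y ^ 2 / √(Δ₀ ^ 2 + 2 * r ^ 2) ≤ y ^ 2 / D :=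
    div_sqrt_le_div_sqrt_of_le (sq_nonneg y) (by rw [hΔ]; nlinarith [sq_nonneg x, sq_nonneg z]) hD
  have hz : z ^ 2 / √(Δ₀ ^ 2 + 2 * r ^ 2) ≤ z ^ 2 / D :=
    div_sqrt_le_div_sqrt_of_le (sq_nonneg z) (by rw [hΔ]; nlinarith [sq_nonneg x, sq_nonneg y]) hD
  set m := min (kξ / √(1 + r ^ 2)) (1 / √(Δ₀ ^ 2 + 2 * r ^ 2))
  calc m * (x ^ 2 + y ^ 2 + z ^ 2) = m * x ^ 2 + m * y ^ 2 + m * z ^ 2 := by ring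
    _ ≤ kξ / √(1 + r ^ 2) * x ^ 2 + 1 / √(Δ₀ ^ 2 + 2 * r ^ 2) * y ^ 2
          + 1 / √(Δ₀ ^ 2 + 2 * r ^ 2) * z ^ 2 := by
      gcongr
      exacts [min_le_left _ _, min_le_right _ _, min_le_right _ _]
    _ = kξ * (x ^ 2 / √(1 + r ^ 2)) + y ^ 2 / √(Δ₀ ^ 2 + 2 * r ^ 2)
          + z ^ 2 / √(Δ₀ ^ 2 + 2 * r ^ 2) := by ring
    _ ≤ kξ * (x ^ 2 / √(1 + x ^ 2)) + y ^ 2 / D + z ^ 2 / D := by gcongr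
    _ = kξ * x ^ 2 / √(1 + x ^ 2) + y ^ 2 / D + z ^ 2 / D := by rw [mul_div_assoc]

/-- **Quadratic lower bound for the path-following part of the Lyapunov derivative.**
With `Δ = √(Δ₀² + x² + y² + z²)` and `D = √(Δ² + y² + z²)`, whenever
`x² + y² + z² ≤ r²`,
`k_ξ x²/√(1+x²) + y²/D + z²/D ≥ min{k_ξ/√(1+r²), 1/√(Δ₀²+2r²)} · (x²+y²+z²)`. -/
theorem path_following_quadratic_lower_bound (Δ₀ kξ r x y z : ℝ)
    (hΔ₀ : 0 < Δ₀) (hkξ : 0 < kξ) (hr : 0 < r)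
    (hball : x ^ 2 + y ^ 2 + z ^ 2 ≤ r ^ 2) :
    let Δ : ℝ := Real.sqrt (Δ₀ ^ 2 + x ^ 2 + y ^ 2 + z ^ 2)
    let D : ℝ := Real.sqrt (Δ ^ 2 + y ^ 2 + z ^ 2)
    kξ * x ^ 2 / Real.sqrt (1 + x ^ 2) + y ^ 2 / D + z ^ 2 / D ≥
      min (kξ / Real.sqrt (1 + r ^ 2)) (1 / Real.sqrt (Δ₀ ^ 2 + 2 * r ^ 2)) *
        (x ^ 2 + y ^ 2 + z ^ 2) :=
  path_following_quadratic_lower_bound_general Δ₀ kξ r x y z hkξ hball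
end

section
/- Let p, v ∈ ℝ² with v ≠ 0, let ρ ∈ ℝ satisfy 0 < ρ < ‖p‖, and set α = arcsin(ρ/‖p‖). If the angle between p and v is strictly greater than α, then for all t ≥ 0 one has ‖p − t·v‖ > ρ. -/
/-!
Write `θ` for the angle between `p` and `v`. Completing the square,
`‖p - t • v‖² = (t‖v‖ - ‖p‖ cos θ)² + ‖p‖² sin² θ`, so every point of the line `ℝ • v` is at
distance at least `‖p‖ sin θ` from `p`. If `θ ≤ π / 2`, then `θ` and `α = arcsin (ρ / ‖p‖)` both
lie in `[-π/2, π/2]`, where `sin` is increasing, so `α < θ` gives `ρ < ‖p‖ sin θ`. If `θ > π / 2`,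
then `⟪p, v⟫ ≤ 0` and moving along the ray `t ↦ t • v` only increases the distance from `p`,
which stays at least `‖p‖ > ρ`.
-/

open Real InnerProductGeometry
open scoped RealInnerProductSpace

section RayDistance

variable {V : Type*} [NormedAddCommGroup V] [InnerProductSpace ℝ V]

theorem norm_sub_smul_sq (p v : V) (t : ℝ) :
    ‖p - t • v‖ ^ 2 = ‖p‖ ^ 2 - 2 * t * ⟪p, v⟫ + t ^ 2 * ‖v‖ ^ 2 := by
  rw [norm_sub_sq_real, inner_smul_right, norm_smul, mul_pow, Real.norm_eq_abs, sq_abs]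
  ring

theorem norm_mul_sin_angle_le_norm_sub_smul (p v : V) (t : ℝ) :
    ‖p‖ * sin (angle p v) ≤ ‖p - t • v‖ := by
  have hsq : ‖p - t • v‖ ^ 2 - (‖p‖ * sin (angle p v)) ^ 2
      = (t * ‖v‖ - cos (angle p v) * ‖p‖) ^ 2 := by
    rw [norm_sub_smul_sq, ← cos_angle_mul_norm_mul_norm]
    linear_combination -‖p‖ ^ 2 * sin_sq_add_cos_sq (angle p v)
  have hsin : 0 ≤ ‖p‖ * sin (angle p v) := mul_nonneg (norm_nonneg p) (sin_angle_nonneg p v)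
  rw [← sq_le_sq₀ hsin (norm_nonneg _)]
  linarith [sq_nonneg (t * ‖v‖ - cos (angle p v) * ‖p‖)]

theorem norm_le_norm_sub_smul_of_inner_nonpos {p v : V} {t : ℝ} (hpv : ⟪p, v⟫ ≤ 0)
    (ht : 0 ≤ t) : ‖p‖ ≤ ‖p - t • v‖ := by
  rw [← sq_le_sq₀ (norm_nonneg _) (norm_nonneg _), norm_sub_smul_sq]
  linarith [mul_nonpos_of_nonneg_of_nonpos ht hpv, sq_nonneg (t * ‖v‖)]

theorem inner_nonpos_of_pi_div_two_le_angle {p v : V} (h : π / 2 ≤ angle p v) : ⟪p, v⟫ ≤ 0 := by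
  rw [← cos_angle_mul_norm_mul_norm]
  refine mul_nonpos_of_nonpos_of_nonneg (cos_nonpos_of_pi_div_two_le_of_le h ?_) (by positivity)
  linarith [angle_le_pi p v, pi_pos]

end RayDistance

theorem collision_cone_safety_general (p v : EuclideanSpace ℝ (Fin 2)) (ρ : ℝ)
    (hρp : ρ < ‖p‖)
    (hangle : Real.arcsin (ρ / ‖p‖) < InnerProductGeometry.angle p v) :
    ∀ t : ℝ, 0 ≤ t → ρ < ‖p - t • v‖ := by
  intro t ht
  rcases le_or_gt (angle p v) (π / 2) with hacute | hobtuse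
  · rcases (norm_nonneg p).eq_or_lt with hp | hp
    · exact (hp ▸ hρp).trans_le (norm_nonneg _)
    have hsin : ρ / ‖p‖ < sin (angle p v) :=
      (arcsin_lt_iff_lt_sin' ⟨by linarith [angle_nonneg p v, pi_pos], hacute⟩).1 hangle
    calc ρ < ‖p‖ * sin (angle p v) := (div_lt_iff₀' hp).1 hsin
      _ ≤ ‖p - t • v‖ := norm_mul_sin_angle_le_norm_sub_smul p v t
  · exact hρp.trans_le
      (norm_le_norm_sub_smul_of_inner_nonpos (inner_nonpos_of_pi_div_two_le_angle hobtuse.le) ht)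

/-- **Collision-cone safety property.**
For `p, v ∈ ℝ²` with `v ≠ 0`, `0 < ρ < ‖p‖` and `α = arcsin(ρ/‖p‖)`: if the angle
between `p` and `v` is strictly greater than `α`, then `‖p − t·v‖ > ρ` for all `t ≥ 0`. -/
theorem collision_cone_safety (p v : EuclideanSpace ℝ (Fin 2)) (ρ : ℝ)
    (hv : v ≠ 0) (hρ : 0 < ρ) (hρp : ρ < ‖p‖)
    (hangle : Real.arcsin (ρ / ‖p‖) < InnerProductGeometry.angle p v) :
    ∀ t : ℝ, 0 ≤ t → ρ < ‖p - t • v‖ :=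
  collision_cone_safety_general p v ρ hρp hangle
end
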